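/- arXiv:2407.03938 — 4 statements merged into one kernel-verified Lean document; each statement's English description precedes it below -/
import Mathlib

section
/- Let G be an abelian group with no elements of order 4. Then there exists a colouring of G with countably many colours such that there do not exist distinct elements x, y ∈ G with 2x, 2y, and x+y all receiving the same colour. -/
/-!
Well-order the abelian group `N` and let `satIio a` (resp. `satIic a`) consist of the elements some
`2`-power multiple of which lies in the subgroup generated by the elements `< a` (resp. `≤ a`).
The birth of `g` is the least `a` with `g ∈ satIic a`; modulo `satIio a` some `2 ^ j • g` is an
integer multiple `m • a`, and `(j, m)` is the code of `g`. Subtracting from `g` a fixed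
representative of its class modulo `satIio (birth g)` lowers the birth, and the colour of `g` is the
finite list of codes met along the way down.

If `x + y = 2 • z` with `x, y, z` of the same colour, let `a` be the largest of their births. In
`N ⧸ satIio a`, which has no `2`-torsion, the images of `x, y, z` are `0` or one common value, which
forces all three to have birth `a` and the same image; stripping them and inducting on the length of
the colour shows that `x - y` is `2`-power torsion. When `G` has no element of order `4`, such
torsion is killed by `2`; applied to `2x, 2y, x + y`, and adding to the colour whether an element is
a double, this forces `x = y`.
-/

namespace AddSubgroup

variable {N : Type*} [AddCommGroup N]

def powSaturation (H : AddSubgroup N) (n : ℕ) : AddSubgroup N where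
  carrier := {x | ∃ j : ℕ, n ^ j • x ∈ H}
  zero_mem' := ⟨0, by simp⟩
  add_mem' := by
    rintro a b ⟨j, hj⟩ ⟨k, hk⟩
    refine ⟨j + k, ?_⟩
    rw [smul_add, pow_add, mul_smul, mul_smul, smul_comm (n ^ j)]
    exact add_mem (nsmul_mem hj _) (nsmul_mem hk _)
  neg_mem' := by
    rintro a ⟨j, hj⟩
    exact ⟨j, by rw [smul_neg]; exact neg_mem hj⟩

variable {H K : AddSubgroup N} {n : ℕ} {x : N}

theorem le_powSaturation : H ≤ H.powSaturation n := fun x hx => ⟨0, by simpa using hx⟩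

theorem powSaturation_mono (h : H ≤ K) : H.powSaturation n ≤ K.powSaturation n :=
  fun _ ⟨j, hj⟩ => ⟨j, h hj⟩

theorem mem_powSaturation_of_pow_nsmul_mem {j : ℕ} (h : n ^ j • x ∈ H.powSaturation n) :
    x ∈ H.powSaturation n := by
  obtain ⟨k, hk⟩ := h
  exact ⟨k + j, by rwa [pow_add, mul_smul]⟩

theorem mem_powSaturation_of_nsmul_mem (h : n • x ∈ H.powSaturation n) :
    x ∈ H.powSaturation n :=
  mem_powSaturation_of_pow_nsmul_mem (j := 1) (by rwa [pow_one])

theorem eq_zero_of_nsmul_eq_zero_quotient_powSaturation (q : N ⧸ H.powSaturation n)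
    (hq : n • q = 0) : q = 0 := by
  induction q using QuotientAddGroup.induction_on with
  | H x =>
    rw [← QuotientAddGroup.mk_nsmul, QuotientAddGroup.eq_zero_iff] at hq
    exact (QuotientAddGroup.eq_zero_iff x).mpr (mem_powSaturation_of_nsmul_mem hq)

end AddSubgroup

theorem eq_and_eq_of_add_eq_two_nsmul {Q : Type*} [AddCommGroup Q]
    (h2 : ∀ q : Q, 2 • q = 0 → q = 0) {p q r : Q}
    (hpq : p ≠ 0 → q ≠ 0 → p = q) (hqr : q ≠ 0 → r ≠ 0 → q = r) (hpr : p ≠ 0 → r ≠ 0 → p = r)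
    (h : p + q = 2 • r) : p = q ∧ q = r := by
  have h2' : ∀ v : Q, v + v = 0 → v = 0 := fun v hv => h2 v (by rwa [two_nsmul])
  rw [two_nsmul] at h
  grind

namespace APColouring

open Set AddSubgroup QuotientAddGroup

section Filtration

variable {N : Type*} [AddCommGroup N] [LinearOrder N]

theorem eq_zero_or_exists_lt_of_mem_closure_Iio {a y : N} (hy : y ∈ closure (Iio a)) :
    y = 0 ∨ ∃ b < a, y ∈ closure (Iic b) := by
  induction hy using closure_induction with
  | mem y hy => exact Or.inr ⟨y, hy, subset_closure self_mem_Iic⟩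
  | zero => exact Or.inl rfl
  | add y z _ _ hy hz =>
    rcases hy with rfl | ⟨b, hb, hyb⟩ <;> rcases hz with rfl | ⟨c, hc, hzc⟩
    · exact Or.inl (add_zero 0)
    · exact Or.inr ⟨c, hc, by rwa [zero_add]⟩
    · exact Or.inr ⟨b, hb, by rwa [add_zero]⟩
    · refine Or.inr ⟨max b c, max_lt hb hc, add_mem ?_ ?_⟩
      · exact closure_mono (Iic_subset_Iic.mpr (le_max_left b c)) hyb
      · exact closure_mono (Iic_subset_Iic.mpr (le_max_right b c)) hzc
  | neg y _ hy =>
    rcases hy with rfl | ⟨b, hb, hyb⟩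
    · exact Or.inl neg_zero
    · exact Or.inr ⟨b, hb, neg_mem hyb⟩

def satIio (a : N) : AddSubgroup N := (closure (Iio a)).powSaturation 2

def satIic (a : N) : AddSubgroup N := (closure (Iic a)).powSaturation 2

theorem satIic_le_satIio_of_lt {a b : N} (h : a < b) : satIic a ≤ satIio b :=
  powSaturation_mono (closure_mono (Iic_subset_Iio.mpr h))

theorem mem_satIic_self (g : N) : g ∈ satIic g := le_powSaturation (subset_closure self_mem_Iic)

theorem exists_pow_nsmul_sub_zsmul_mem_satIio {a g : N} (h : g ∈ satIic a) :
    ∃ p : ℕ × ℤ, 2 ^ p.1 • g - p.2 • a ∈ satIio a := by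
  obtain ⟨j, hj⟩ := h
  rw [← Iio_insert, insert_eq, AddSubgroup.closure_union, mem_sup] at hj
  obtain ⟨_, hm, y, hy, hsum⟩ := hj
  obtain ⟨m, rfl⟩ := mem_closure_singleton.mp hm
  exact ⟨(j, m), by rw [← hsum, add_sub_cancel_left]; exact le_powSaturation hy⟩

noncomputable def rep (a g : N) : N := (g : N ⧸ satIio a).out

theorem sub_rep_mem_satIio (a g : N) : g - rep a g ∈ satIio a :=
  eq_iff_sub_mem.mp (out_eq' (g : N ⧸ satIio a)).symm

variable [WellFoundedLT N] {a g x y z : N}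

noncomputable def birth (g : N) : N :=
  (wellFounded_lt (α := N)).min {a | g ∈ satIic a} ⟨g, mem_satIic_self g⟩

theorem mem_satIic_birth (g : N) : g ∈ satIic (birth g) :=
  (wellFounded_lt (α := N)).min_mem {a | g ∈ satIic a} ⟨g, mem_satIic_self g⟩

theorem birth_le_of_mem_satIic (h : g ∈ satIic a) : birth g ≤ a :=
  (wellFounded_lt (α := N)).min_le (s := {a | g ∈ satIic a}) h

theorem mem_satIio_of_birth_lt (h : birth g < a) : g ∈ satIio a :=
  satIic_le_satIio_of_lt h (mem_satIic_birth g)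

theorem birth_lt_of_mem_satIio (hg : g ∈ satIio a) (hT : g ∉ (⊥ : AddSubgroup N).powSaturation 2) :
    birth g < a := by
  obtain ⟨j, hj⟩ := hg
  rcases eq_zero_or_exists_lt_of_mem_closure_Iio hj with h0 | ⟨b, hb, hjb⟩
  · exact absurd ⟨j, h0 ▸ zero_mem ⊥⟩ hT
  · have hgb : g ∈ satIic b := mem_powSaturation_of_pow_nsmul_mem (le_powSaturation hjb)
    exact (birth_le_of_mem_satIic hgb).trans_lt hb

theorem mk_eq_zero_iff_birth_lt (hT : g ∉ (⊥ : AddSubgroup N).powSaturation 2) :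
    (g : N ⧸ satIio a) = 0 ↔ birth g < a := by
  rw [eq_zero_iff]
  exact ⟨fun h => birth_lt_of_mem_satIio h hT, mem_satIio_of_birth_lt⟩

noncomputable def code (g : N) : ℕ × ℤ :=
  (exists_pow_nsmul_sub_zsmul_mem_satIio (mem_satIic_birth g)).choose

theorem code_spec (g : N) : 2 ^ (code g).1 • g - (code g).2 • birth g ∈ satIio (birth g) :=
  (exists_pow_nsmul_sub_zsmul_mem_satIio (mem_satIic_birth g)).choose_spec

theorem mk_eq_mk_of_code_eq (hb : birth x = birth y) (hc : code x = code y) :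
    (x : N ⧸ satIio (birth x)) = y := by
  have hx := code_spec x
  have hy := code_spec y
  rw [← hb, ← hc] at hy
  rw [eq_iff_sub_mem]
  refine mem_powSaturation_of_pow_nsmul_mem (j := (code x).1) ?_
  have h := sub_mem hx hy
  rwa [sub_sub_sub_cancel_right, ← smul_sub] at h

noncomputable def strip (g : N) : N := g - rep (birth g) g

open scoped Classical in
noncomputable def level (g : N) : WithBot N :=
  if g ∈ (⊥ : AddSubgroup N).powSaturation 2 then ⊥ else WithBot.some (birth g)

theorem level_strip_lt (hg : g ∉ (⊥ : AddSubgroup N).powSaturation 2) :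
    level (strip g) < level g := by
  rw [level, level, if_neg hg]
  split_ifs with hs
  · exact WithBot.bot_lt_coe _
  · exact WithBot.coe_lt_coe.mpr (birth_lt_of_mem_satIio (sub_rep_mem_satIio _ _) hs)

attribute [local instance] WellFoundedLT.toWellFoundedRelation in
open scoped Classical in
noncomputable def word (g : N) : List (ℕ × ℤ) :=
  if g ∈ (⊥ : AddSubgroup N).powSaturation 2 then [] else word (strip g) ++ [code g]
termination_by level g
decreasing_by exact level_strip_lt ‹_›

theorem word_of_mem (hg : g ∈ (⊥ : AddSubgroup N).powSaturation 2) : word g = [] := by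
  rw [word, if_pos hg]

theorem word_of_not_mem (hg : g ∉ (⊥ : AddSubgroup N).powSaturation 2) :
    word g = word (strip g) ++ [code g] := by
  rw [word, if_neg hg]

theorem word_eq_nil_iff : word g = [] ↔ g ∈ (⊥ : AddSubgroup N).powSaturation 2 := by
  refine ⟨fun h => ?_, word_of_mem⟩
  by_contra hg
  simp [word_of_not_mem hg] at h

theorem birth_eq_of_add_eq_two_nsmul (hx : x ∉ (⊥ : AddSubgroup N).powSaturation 2)
    (hy : y ∉ (⊥ : AddSubgroup N).powSaturation 2) (hz : z ∉ (⊥ : AddSubgroup N).powSaturation 2)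
    (hsum : x + y = 2 • z) (hxy : code x = code y) (hyz : code y = code z) :
    birth x = birth y ∧ birth y = birth z := by
  set a := max (birth x) (max (birth y) (birth z))
  have hxa : birth x ≤ a := le_max_left _ _
  have hya : birth y ≤ a := (le_max_left _ _).trans (le_max_right _ _)
  have hza : birth z ≤ a := (le_max_right _ _).trans (le_max_right _ _)
  have birth_eq {g : N} (hg : g ∉ (⊥ : AddSubgroup N).powSaturation 2) (hga : birth g ≤ a)
      (h0 : (g : N ⧸ satIio a) ≠ 0) : birth g = a :=
    hga.antisymm (not_lt.mp (mt (mk_eq_zero_iff_birth_lt hg).mpr h0))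
  have mk_eq {g g' : N} (hg : g ∉ (⊥ : AddSubgroup N).powSaturation 2)
      (hg' : g' ∉ (⊥ : AddSubgroup N).powSaturation 2) (hga : birth g ≤ a) (hga' : birth g' ≤ a)
      (hc : code g = code g') (h0 : (g : N ⧸ satIio a) ≠ 0) (h0' : (g' : N ⧸ satIio a) ≠ 0) :
      (g : N ⧸ satIio a) = g' := by
    have hb := birth_eq hg hga h0
    have h := mk_eq_mk_of_code_eq (hb.trans (birth_eq hg' hga' h0').symm) hc
    rwa [hb] at h
  obtain ⟨hmxy, hmyz⟩ := eq_and_eq_of_add_eq_two_nsmul (Q := N ⧸ satIio a)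
    eq_zero_of_nsmul_eq_zero_quotient_powSaturation (mk_eq hx hy hxa hya hxy)
    (mk_eq hy hz hya hza hyz) (mk_eq hx hz hxa hza (hxy.trans hyz))
    (by rw [← mk_add, hsum, mk_nsmul])
  have hx0 : (x : N ⧸ satIio a) ≠ 0 := by
    intro h0
    have hbx := (mk_eq_zero_iff_birth_lt hx).mp h0
    have hby := (mk_eq_zero_iff_birth_lt hy).mp (hmxy ▸ h0)
    have hbz := (mk_eq_zero_iff_birth_lt hz).mp (hmyz ▸ hmxy ▸ h0)
    exact lt_irrefl a (max_lt hbx (max_lt hby hbz))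
  have hbx := birth_eq hx hxa hx0
  have hby := birth_eq hy hya (hmxy ▸ hx0)
  have hbz := birth_eq hz hza (hmyz ▸ hmxy ▸ hx0)
  exact ⟨hbx.trans hby.symm, hby.trans hbz.symm⟩

theorem rep_birth_eq_of_code_eq (hb : birth x = birth y) (hc : code x = code y) :
    rep (birth x) x = rep (birth y) y := by
  rw [rep, rep, ← hb, mk_eq_mk_of_code_eq hb hc]

theorem sub_mem_of_add_eq_two_nsmul_of_word_eq (hsum : x + y = 2 • z) (hxy : word x = word y)
    (hyz : word y = word z) : x - y ∈ (⊥ : AddSubgroup N).powSaturation 2 := by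
  induction hn : (word x).length using Nat.strong_induction_on generalizing x y z with
  | _ n ih =>
  by_cases hx : x ∈ (⊥ : AddSubgroup N).powSaturation 2
  · exact sub_mem hx (word_eq_nil_iff.mp (hxy ▸ word_of_mem hx))
  have hy : y ∉ (⊥ : AddSubgroup N).powSaturation 2 :=
    fun hy => hx (word_eq_nil_iff.mp (hxy ▸ word_of_mem hy))
  have hz : z ∉ (⊥ : AddSubgroup N).powSaturation 2 :=
    fun hz => hy (word_eq_nil_iff.mp (hyz ▸ word_of_mem hz))
  rw [word_of_not_mem hx, word_of_not_mem hy] at hxy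
  rw [word_of_not_mem hy, word_of_not_mem hz] at hyz
  obtain ⟨hwxy, hcxy⟩ := List.append_inj' hxy rfl
  obtain ⟨hwyz, hcyz⟩ := List.append_inj' hyz rfl
  rw [List.singleton_inj] at hcxy hcyz
  obtain ⟨hbxy, hbyz⟩ := birth_eq_of_add_eq_two_nsmul hx hy hz hsum hcxy hcyz
  have hry := rep_birth_eq_of_code_eq hbyz hcyz
  have hrx := (rep_birth_eq_of_code_eq hbxy hcxy).trans hry
  have hstrip : strip x + strip y = 2 • strip z := by
    rw [strip, strip, strip, hrx, hry, smul_sub, ← hsum, two_nsmul]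
    abel
  have hlt : (word (strip x)).length < n := by simp [← hn, word_of_not_mem hx]
  have h := ih _ hlt hstrip hwxy hwyz rfl
  rwa [strip, strip, hrx, hry, sub_sub_sub_cancel_right] at h

end Filtration

end APColouring

section NoElementOfOrderFour

variable {G : Type*} [AddCommGroup G]

theorem two_nsmul_eq_zero_of_mem_powSaturation (h4 : ∀ a : G, 4 • a = 0 → 2 • a = 0) {a : G}
    (ha : a ∈ (⊥ : AddSubgroup G).powSaturation 2) : 2 • a = 0 := by
  obtain ⟨j, hj⟩ := ha
  induction j generalizing a with
  | zero => simp_all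
  | succ j ih =>
    rw [pow_succ, mul_smul] at hj
    exact h4 a (by rw [show 4 = 2 * 2 from rfl, mul_smul]; exact ih hj)

theorem eq_of_two_nsmul_sub_mem_powSaturation (h4 : ∀ a : G, 4 • a = 0 → 2 • a = 0) {x y u : G}
    (hT : 2 • x - 2 • y ∈ (⊥ : AddSubgroup G).powSaturation 2) (hu : 2 • u = x + y) : x = y := by
  have hxy : x - y = 2 • (x - u) := by
    rw [smul_sub, hu, two_nsmul]
    abel
  have hxu : x - u ∈ (⊥ : AddSubgroup G).powSaturation 2 :=
    AddSubgroup.mem_powSaturation_of_pow_nsmul_mem (j := 2)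
      (by rwa [pow_two, mul_smul, ← hxy, smul_sub])
  exact sub_eq_zero.mp (hxy.trans (two_nsmul_eq_zero_of_mem_powSaturation h4 hxu))

end NoElementOfOrderFour

/-- An abelian group with no elements of order 4 admits a countable
colouring with no monochromatic `{2x, 2y, x+y}` for distinct `x, y`. -/
theorem stmt_0 (G : Type*) [AddCommGroup G]
    (h4 : ∀ a : G, (4 : ℕ) • a = 0 → (2 : ℕ) • a = 0) :
    ∃ c : G → ℕ, ∀ x y : G, x ≠ y →
      ¬ (c ((2 : ℕ) • x) = c ((2 : ℕ) • y) ∧ c ((2 : ℕ) • y) = c (x + y)) := by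
  classical
  obtain ⟨_, _⟩ := exists_wellFoundedLT G
  refine ⟨fun g => Encodable.encode (decide (∃ u : G, 2 • u = g), APColouring.word g), ?_⟩
  rintro x y hne ⟨hxy, hyz⟩
  obtain ⟨-, hwxy⟩ := Prod.ext_iff.mp (Encodable.encode_injective hxy)
  obtain ⟨hdouble, hwyz⟩ := Prod.ext_iff.mp (Encodable.encode_injective hyz)
  obtain ⟨u, hu⟩ : ∃ u : G, 2 • u = x + y := (decide_eq_decide.mp hdouble).mp ⟨y, rfl⟩
  have hT := APColouring.sub_mem_of_add_eq_two_nsmul_of_word_eq (smul_add 2 x y).symm hwxy hwyz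
  exact hne (eq_of_two_nsmul_sub_mem_powSaturation h4 hT hu)
end

section
/- Let G be an abelian group with no elements of order 4, let x ∈ G, and let p be an odd prime. In the quotient group (G × ℤ)/⟨(x, p)⟩, the image of G × {0} is an isomorphic copy of G, the image of x is divisible by p, and the quotient group still has no elements of order 4. -/
/-- quotienting `G × ℤ` by `⟨(x, p)⟩` (p an odd prime) keeps a copy of `G`,
makes the image of `x` divisible by `p`, and creates no elements of order 4. -/
theorem stmt_2 (G : Type*) [AddCommGroup G]
    (h4 : ∀ a : G, (4 : ℕ) • a = 0 → (2 : ℕ) • a = 0)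
    (x : G) (p : ℕ) (hp : p.Prime) (hodd : Odd p) :
    Function.Injective
        (fun g : G => QuotientAddGroup.mk' (AddSubgroup.zmultiples ((x, (p : ℤ)) : G × ℤ)) (g, 0))
      ∧ (∃ h : (G × ℤ) ⧸ AddSubgroup.zmultiples ((x, (p : ℤ)) : G × ℤ),
          p • h = QuotientAddGroup.mk' (AddSubgroup.zmultiples ((x, (p : ℤ)) : G × ℤ)) (x, 0))
      ∧ (∀ a : (G × ℤ) ⧸ AddSubgroup.zmultiples ((x, (p : ℤ)) : G × ℤ),
          (4 : ℕ) • a = 0 → (2 : ℕ) • a = 0) := by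
  have hp0 : (p : ℤ) ≠ 0 := by exact_mod_cast hp.ne_zero
  refine ⟨?_, ?_, ?_⟩
  · intro g g' h
    simp only [QuotientAddGroup.mk'_eq_mk'] at h
    obtain ⟨z, hz, heq⟩ := h
    obtain ⟨k, hk⟩ := AddSubgroup.mem_zmultiples_iff.mp hz
    rw [← hk] at heq
    have h2 : (g : G) + k • x = g' ∧ (0 : ℤ) + k • (p : ℤ) = 0 := by
      constructor
      · exact congrArg Prod.fst heq
      · exact congrArg Prod.snd heq
    obtain ⟨h2a, h2b⟩ := h2
    have hk0 : k = 0 := by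
      have : k * (p : ℤ) = 0 := by rw [smul_eq_mul] at h2b; linarith
      rcases mul_eq_zero.mp this with h | h
      · exact h
      · exact absurd h hp0
    rw [hk0, zero_smul, add_zero] at h2a
    exact h2a
  · refine ⟨QuotientAddGroup.mk' _ (x, (p : ℤ) - 1), ?_⟩
    rw [← map_nsmul, QuotientAddGroup.mk'_eq_mk']
    refine ⟨((1 : ℤ) - p) • (x, (p : ℤ)), AddSubgroup.zsmul_mem _ (AddSubgroup.mem_zmultiples _) _, ?_⟩
    ext
    · show p • x + ((1 : ℤ) - p) • x = x
      rw [← natCast_zsmul, ← add_zsmul]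
      have h1 : ((p : ℤ) + (1 - p)) = 1 := by ring
      rw [h1, one_zsmul]
    · show p • ((p : ℤ) - 1) + ((1 : ℤ) - p) * (p : ℤ) = 0
      rw [nsmul_eq_mul]
      push_cast
      ring
  · intro a ha
    induction a using QuotientAddGroup.induction_on with
    | H gn =>
      obtain ⟨g, n⟩ := gn
      rw [← QuotientAddGroup.mk_nsmul, QuotientAddGroup.eq_zero_iff] at ha ⊢
      obtain ⟨k, hk⟩ := AddSubgroup.mem_zmultiples_iff.mp ha
      have h1 : k • x = (4 : ℕ) • g := congrArg Prod.fst hk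
      have h2 : k * (p : ℤ) = 4 * n := by
        have := congrArg Prod.snd hk
        simpa [smul_eq_mul, Prod.smul_snd] using this
      have hpn : (p : ℤ) ∣ 4 * n := ⟨k, by linarith [h2]⟩
      have hp2 : p ≠ 2 := by
        rintro rfl
        exact (Nat.not_odd_iff_even.mpr (by norm_num)) hodd
      have hpInt : Prime (p : ℤ) := Nat.prime_iff_prime_int.mp hp
      have hpn' : (p : ℤ) ∣ n := by
        rcases hpInt.dvd_mul.mp hpn with h | h
        · exfalso
          have h4' : (p : ℤ) ∣ ((4 : ℕ) : ℤ) := by exact_mod_cast h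
          have hd : p ∣ 4 := by exact_mod_cast h4'
          have : p ∣ 2 := hp.dvd_of_dvd_pow (n := 2) (by norm_num at hd ⊢; omega : p ∣ 2 ^ 2)
          exact hp2 ((Nat.prime_dvd_prime_iff_eq hp Nat.prime_two).mp this)
        · exact h
      obtain ⟨m, hm⟩ := hpn'
      have hk4m : k = 4 * m := by
        have : k * (p : ℤ) = 4 * m * (p : ℤ) := by rw [h2, hm]; ring
        exact mul_right_cancel₀ hp0 this
      have h1' : (4 * m) • x = (4 : ℕ) • g := by rw [← hk4m, h1]
      have hg : (4 : ℕ) • (g - m • x) = 0 := by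
        rw [smul_sub, ← h1', sub_eq_zero, ← natCast_zsmul (m • x) 4, smul_smul]
        norm_num
      have hg2 := h4 _ hg
      have h2g : (2 : ℕ) • g = (2 : ℕ) • (m • x) := by
        rw [smul_sub, sub_eq_zero] at hg2
        exact hg2
      refine AddSubgroup.mem_zmultiples_iff.mpr ⟨2 * m, ?_⟩
      ext
      · show (2 * m) • x = (2 : ℕ) • g
        rw [h2g, ← natCast_zsmul (m • x) 2, smul_smul]
        norm_num
      · show (2 * m) * (p : ℤ) = (2 : ℕ) • n
        rw [nsmul_eq_mul, hm]
        push_cast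
        ring
end

section
/- Let D be an abelian group in which every nonzero element has odd finite order, written as a direct sum ⊕_{i∈I} D_i over a linearly ordered index set I. If d, e ∈ D satisfy: 2d, 2e, and d+e all have the same profile (the finite sequence of nonzero coordinates listed in increasing order of index), then d = e. -/
open DirectSum

/-- The profile of an element of a direct sum of subgroups of an ambient abelian group `A`:
the finite sequence of its nonzero coordinates, in increasing order of index. -/
noncomputable def profileSub {I : Type*} [LinearOrder I] {A : Type*} [AddCommGroup A]
    (D : I → AddSubgroup A) (d : ⨁ i, D i) : List A :=
  letI := Classical.decEq I
  letI : ∀ i, ∀ x : D i, Decidable (x ≠ 0) := fun _ _ => Classical.dec _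
  ((DFinsupp.support d).sort (· ≤ ·)).map fun i => ((d i : D i) : A)

section Aux

variable {I : Type*} [LinearOrder I] {A : Type*} [AddCommGroup A] (D : I → AddSubgroup A)

/-- Generic-instance version of `profileSub`. -/
def profAux [DecidableEq I] [∀ i (x : D i), Decidable (x ≠ 0)] (x : ⨁ i, D i) : List A :=
  ((DFinsupp.support x).sort (· ≤ ·)).map fun i => ((x i : D i) : A)

lemma profileSub_eq_profAux [DecidableEq I] [∀ i (x : D i), Decidable (x ≠ 0)]
    (x : ⨁ i, D i) : profileSub D x = profAux D x := by
  unfold profileSub profAux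
  congr!

omit [LinearOrder I] in
lemma aux_two_nsmul_eq_zero
    (hodd : ∀ i, ∀ t : D i, t ≠ 0 → addOrderOf t ≠ 0 ∧ Odd (addOrderOf t))
    (i : I) (t : D i) (h : (2 : ℕ) • t = 0) : t = 0 := by
  by_contra ht
  obtain ⟨h0, k, hk⟩ := hodd i t ht
  have hdvd : addOrderOf t ∣ 2 := addOrderOf_dvd_of_nsmul_eq_zero h
  rcases (Nat.dvd_prime Nat.prime_two).mp hdvd with h' | h'
  · exact ht (AddMonoid.addOrderOf_eq_one_iff.mp h')
  · omega

omit [LinearOrder I] in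
/-- In the direct sum, a coordinate of `2•x` is `2•` the coordinate. -/
lemma aux_two_nsmul_apply (x : ⨁ i, D i) (i : I) :
    ((2 : ℕ) • x) i = (2 : ℕ) • (x i) := by
  rw [two_nsmul, two_nsmul, DFinsupp.add_apply]

omit [LinearOrder I] in
lemma aux_two_nsmul_apply_ne (hodd : ∀ i, ∀ t : D i, t ≠ 0 → addOrderOf t ≠ 0 ∧ Odd (addOrderOf t))
    (x : ⨁ i, D i) (i : I) : ((2 : ℕ) • x) i ≠ 0 ↔ x i ≠ 0 := by
  rw [aux_two_nsmul_apply]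
  constructor
  · intro h hx; rw [hx] at h; simp at h
  · intro h h2; exact h (aux_two_nsmul_eq_zero D hodd i _ h2)


omit [LinearOrder I] in
lemma aux_two_nsmul_eq_zero' (hodd : ∀ i, ∀ t : D i, t ≠ 0 → addOrderOf t ≠ 0 ∧ Odd (addOrderOf t))
    (x : ⨁ i, D i) (h : (2 : ℕ) • x = 0) : x = 0 := by
  refine DFinsupp.ext fun i => ?_
  have h' := congrFun (congrArg DFunLike.coe h) i
  rw [aux_two_nsmul_apply, DFinsupp.zero_apply] at h'
  rw [DFinsupp.zero_apply]
  exact aux_two_nsmul_eq_zero D hodd i _ h' 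

lemma prof_nil [DecidableEq I] [∀ i (x : D i), Decidable (x ≠ 0)]
    (x : ⨁ i, D i) : profAux D x = [] ↔ x = 0 := by
  constructor
  · intro hx
    unfold profAux at hx
    simp only [List.map_eq_nil_iff] at hx
    refine DFinsupp.support_eq_empty.mp (Finset.card_eq_zero.mp ?_)
    rw [← Finset.length_sort (α := I) (· ≤ ·), hx, List.length_nil]
  · rintro rfl
    unfold profAux
    simp

/-- Cons structure of the profile at its minimal support element. -/
lemma prof_cons [DecidableEq I] [∀ i (x : D i), Decidable (x ≠ 0)]
    (x : ⨁ i, D i) (i1 : I) (h0 : x i1 ≠ 0)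
    (hmin : ∀ j, x j ≠ 0 → i1 ≤ j) :
    profAux D x = ((x i1 : D i1) : A) :: profAux D (x.erase i1) := by
  unfold profAux
  have hse : DFinsupp.support (x.erase i1) = (DFinsupp.support x).erase i1 :=
    DFinsupp.support_erase i1 x
  have hsupp : DFinsupp.support x = insert i1 ((DFinsupp.support x).erase i1) := by
    rw [Finset.insert_erase]
    exact DFinsupp.mem_support_iff.mpr h0
  rw [hsupp, Finset.sort_insert, ← hse]
  · simp only [List.map_cons]
    congr 1
    apply List.map_congr_left
    intro j hj
    have hj' : j ≠ i1 := by
      have := (Finset.mem_sort (α := I) (· ≤ ·)).mp hj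
      rw [hse] at this
      exact (Finset.mem_erase.mp this).1
    rw [DFinsupp.erase_apply, if_neg hj']
  · intro b hb
    have hb' := Finset.mem_erase.mp hb
    exact hmin b (DFinsupp.mem_support_iff.mp hb'.2)
  · simp

omit [LinearOrder I] in
lemma aux_erase_two_nsmul [DecidableEq I] (x : ⨁ i, D i) (i1 : I) :
    ((2 : ℕ) • x).erase i1 = (2 : ℕ) • (x.erase i1) := by
  ext j
  rw [DFinsupp.erase_apply, aux_two_nsmul_apply, aux_two_nsmul_apply, DFinsupp.erase_apply]
  split <;> simp

omit [LinearOrder I] in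
lemma aux_erase_add [DecidableEq I] (x y : ⨁ i, D i) (i1 : I) :
    (x + y).erase i1 = x.erase i1 + y.erase i1 := by
  ext j
  rw [DFinsupp.add_apply, DFinsupp.erase_apply, DFinsupp.erase_apply, DFinsupp.erase_apply,
    DFinsupp.add_apply]
  split <;> simp

end Aux

/-- in a direct sum of groups all of whose nonzero elements have odd finite
order, if `2d`, `2e`, `d + e` all have the same profile then `d = e`. -/
theorem stmt_6 {I : Type*} [LinearOrder I] {A : Type*} [AddCommGroup A]
    (D : I → AddSubgroup A)
    (hodd : ∀ i, ∀ t : D i, t ≠ 0 → addOrderOf t ≠ 0 ∧ Odd (addOrderOf t))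
    (d e : ⨁ i, D i)
    (h1 : profileSub D ((2 : ℕ) • d) = profileSub D ((2 : ℕ) • e))
    (h2 : profileSub D ((2 : ℕ) • e) = profileSub D (d + e)) :
    d = e := by
  classical
  simp only [profileSub_eq_profAux] at h1 h2
  -- main induction on the size of the support of d
  suffices H : ∀ n (d e : ⨁ i, D i), (DFinsupp.support d).card ≤ n →
      profAux D ((2 : ℕ) • d) = profAux D ((2 : ℕ) • e) →
      profAux D ((2 : ℕ) • e) = profAux D (d + e) → d = e by
    exact H (DFinsupp.support d).card d e le_rfl h1 h2
  clear h1 h2 d e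
  intro n
  induction n with
  | zero =>
    intro d e hcard h1 h2
    have hd : d = 0 := DFinsupp.support_eq_empty.mp (Finset.card_eq_zero.mp (Nat.le_zero.mp hcard))
    subst hd
    rw [smul_zero, (prof_nil D 0).mpr rfl] at h1
    rw [aux_two_nsmul_eq_zero' D hodd e ((prof_nil D _).mp h1.symm)]
  | succ n ih =>
    intro d e hcard h1 h2
    by_cases hd0 : d = 0
    · -- same as zero case
      subst hd0
      rw [smul_zero, (prof_nil D 0).mpr rfl] at h1
      rw [aux_two_nsmul_eq_zero' D hodd e ((prof_nil D _).mp h1.symm)]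
    by_cases he0 : e = 0
    · subst he0
      rw [smul_zero, (prof_nil D 0).mpr rfl] at h1
      rw [aux_two_nsmul_eq_zero' D hodd d ((prof_nil D _).mp h1)]
    -- both nonzero: take minimal support elements
    have hdne : (DFinsupp.support d).Nonempty := by
      rw [Finset.nonempty_iff_ne_empty]
      intro h; exact hd0 (DFinsupp.support_eq_empty.mp h)
    have hene : (DFinsupp.support e).Nonempty := by
      rw [Finset.nonempty_iff_ne_empty]
      intro h; exact he0 (DFinsupp.support_eq_empty.mp h)
    obtain ⟨i1, hdi1, hdmin⟩ : ∃ i1, d i1 ≠ 0 ∧ ∀ j, d j ≠ 0 → i1 ≤ j :=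
      ⟨(DFinsupp.support d).min' hdne,
        DFinsupp.mem_support_iff.mp ((DFinsupp.support d).min'_mem hdne),
        fun j hj => (DFinsupp.support d).min'_le j (DFinsupp.mem_support_iff.mpr hj)⟩
    obtain ⟨j1, hej1, hemin⟩ : ∃ j1, e j1 ≠ 0 ∧ ∀ j, e j ≠ 0 → j1 ≤ j :=
      ⟨(DFinsupp.support e).min' hene,
        DFinsupp.mem_support_iff.mp ((DFinsupp.support e).min'_mem hene),
        fun j hj => (DFinsupp.support e).min'_le j (DFinsupp.mem_support_iff.mpr hj)⟩
    -- cons decompositions of the doubled profiles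
    have c1 : profAux D ((2:ℕ) • d)
        = ((((2:ℕ) • d) i1 : D i1) : A) :: profAux D (((2:ℕ) • d).erase i1) :=
      prof_cons D _ i1 ((aux_two_nsmul_apply_ne D hodd d i1).mpr hdi1)
        (fun j hj => hdmin j ((aux_two_nsmul_apply_ne D hodd d j).mp hj))
    have c2 : profAux D ((2:ℕ) • e)
        = ((((2:ℕ) • e) j1 : D j1) : A) :: profAux D (((2:ℕ) • e).erase j1) :=
      prof_cons D _ j1 ((aux_two_nsmul_apply_ne D hodd e j1).mpr hej1)
        (fun j hj => hemin j ((aux_two_nsmul_apply_ne D hodd e j).mp hj))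
    rcases lt_trichotomy i1 j1 with hlt | heq | hgt
    · -- impossible: head of profile(2d) equals head of profile(d+e) at i1
      exfalso
      have hei1 : e i1 = 0 := by
        by_contra h; exact absurd (hemin i1 h) (not_le.mpr hlt)
      have hsum_i1 : (d + e) i1 = d i1 := by
        rw [DFinsupp.add_apply, hei1, add_zero]
      have c3 : profAux D (d + e)
          = (((d + e) i1 : D i1) : A) :: profAux D ((d + e).erase i1) := by
        refine prof_cons D _ i1 (by rw [hsum_i1]; exact hdi1) ?_
        intro j hj
        rw [DFinsupp.add_apply] at hj
        rcases (by by_contra hc; push_neg at hc; rw [hc.1, hc.2, add_zero] at hj; exact hj rfl :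
          d j ≠ 0 ∨ e j ≠ 0) with h | h
        · exact hdmin j h
        · exact le_trans hlt.le (hemin j h)
      have hh := h1.trans h2
      rw [c1, c3] at hh
      have hhead : ((((2:ℕ) • d) i1 : D i1) : A) = (((d + e) i1 : D i1) : A) :=
        (List.cons.injEq _ _ _ _).mp hh |>.1
      rw [hsum_i1, aux_two_nsmul_apply] at hhead
      push_cast at hhead
      have hz : ((d i1 : D i1) : A) = 0 := by
        rw [two_nsmul] at hhead
        linear_combination (norm := abel) hhead
      exact hdi1 (by exact_mod_cast Subtype.ext hz)
    · -- i1 = j1 : peel off the head and induct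
      subst heq
      rw [c1, c2] at h1
      have hhead := (List.cons.injEq _ _ _ _).mp h1 |>.1
      have htail := (List.cons.injEq _ _ _ _).mp h1 |>.2
      -- d i1 = e i1
      have hde1 : d i1 = e i1 := by
        have : (2:ℕ) • (d i1 - e i1) = 0 := by
          rw [aux_two_nsmul_apply, aux_two_nsmul_apply] at hhead
          have : ((2:ℕ) • (d i1) : D i1) = (2:ℕ) • (e i1) := by
            exact_mod_cast Subtype.ext (by push_cast at hhead ⊢; exact hhead)
          rw [smul_sub, this, sub_self]
        have := aux_two_nsmul_eq_zero D hodd i1 _ this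
        exact sub_eq_zero.mp this
      -- head of the (d+e)-profile
      have hsum_i1 : (d + e) i1 = (2:ℕ) • (d i1) := by
        rw [DFinsupp.add_apply, ← hde1, two_nsmul]
      have c3 : profAux D (d + e)
          = (((d + e) i1 : D i1) : A) :: profAux D ((d + e).erase i1) := by
        refine prof_cons D _ i1 ?_ ?_
        · rw [hsum_i1]
          intro hc
          exact hdi1 (aux_two_nsmul_eq_zero D hodd i1 _ hc)
        · intro j hj
          rw [DFinsupp.add_apply] at hj
          rcases (by by_contra hc; push_neg at hc; rw [hc.1, hc.2, add_zero] at hj; exact hj rfl :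
            d j ≠ 0 ∨ e j ≠ 0) with h | h
          · exact hdmin j h
          · exact hemin j h
      rw [c2, c3] at h2
      have htail2 := (List.cons.injEq _ _ _ _).mp h2 |>.2
      -- apply the inductive hypothesis to the erased elements
      simp only [aux_erase_two_nsmul, aux_erase_add] at htail htail2
      have hcard' : (DFinsupp.support (d.erase i1)).card ≤ n := by
        rw [DFinsupp.support_erase]
        have h1' : ((DFinsupp.support d).erase i1).card < (DFinsupp.support d).card :=
          Finset.card_erase_lt_of_mem (DFinsupp.mem_support_iff.mpr hdi1)
        omega
      have hfin := ih (d.erase i1) (e.erase i1) hcard' htail htail2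
      refine DFinsupp.ext fun j => ?_
      by_cases hj : j = i1
      · subst hj; exact hde1
      · have := congrFun (congrArg DFunLike.coe hfin) j
        rwa [DFinsupp.erase_apply, DFinsupp.erase_apply, if_neg hj, if_neg hj] at this
    · -- symmetric impossible case: j1 < i1
      exfalso
      have hdj1 : d j1 = 0 := by
        by_contra h; exact absurd (hdmin j1 h) (not_le.mpr hgt)
      have hsum_j1 : (d + e) j1 = e j1 := by
        rw [DFinsupp.add_apply, hdj1, zero_add]
      have c3 : profAux D (d + e)
          = (((d + e) j1 : D j1) : A) :: profAux D ((d + e).erase j1) := by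
        refine prof_cons D _ j1 (by rw [hsum_j1]; exact hej1) ?_
        intro j hj
        rw [DFinsupp.add_apply] at hj
        rcases (by by_contra hc; push_neg at hc; rw [hc.1, hc.2, add_zero] at hj; exact hj rfl :
          d j ≠ 0 ∨ e j ≠ 0) with h | h
        · exact le_trans hgt.le (hdmin j h)
        · exact hemin j h
      rw [c2, c3] at h2
      have hhead : ((((2:ℕ) • e) j1 : D j1) : A) = (((d + e) j1 : D j1) : A) :=
        (List.cons.injEq _ _ _ _).mp h2 |>.1
      rw [hsum_j1, aux_two_nsmul_apply] at hhead
      push_cast at hhead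
      have hz : ((e j1 : D j1) : A) = 0 := by
        rw [two_nsmul] at hhead
        linear_combination (norm := abel) hhead
      exact hej1 (by exact_mod_cast Subtype.ext hz)
end

section
/- Let G be an abelian group such that every nonzero torsion element of G has order 2, and suppose the doubling map restricted to each coset of the torsion subgroup T hits at most one element (equivalently G has no elements of order 4). Define a 2-colouring of G by whether an element is halvable (lies in 2G). Then for any x, y ∈ G with x ≠ y but x + T = y + T, the elements 2x and x + y receive different colours. -/
/-- with torsion of exponent 2 and no elements of order 4, colouring by
halvability: for distinct `x, y` in the same coset of the torsion subgroup, `2x` is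
halvable while `x + y` is not. -/
theorem stmt_14 (G : Type*) [AddCommGroup G]
    (h4 : ∀ a : G, (4 : ℕ) • a = 0 → (2 : ℕ) • a = 0)
    (hT : ∀ t ∈ AddCommGroup.torsion G, (2 : ℕ) • t = 0)
    (x y : G) (hxy : x ≠ y) (hcoset : x - y ∈ AddCommGroup.torsion G) :
    (∃ g : G, (2 : ℕ) • g = (2 : ℕ) • x) ∧ ¬ ∃ g : G, (2 : ℕ) • g = x + y := by
  refine ⟨⟨x, rfl⟩, ?_⟩
  rintro ⟨g, hg⟩
  have h2 : (2 : ℕ) • (x - y) = 0 := hT _ hcoset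
  have h4' : (4 : ℕ) • (g - y) = 0 := by
    have : (2 : ℕ) • (g - y) = x - y := by
      simp only [smul_sub] at *
      rw [hg]; abel
    have : (4 : ℕ) • (g - y) = (2 : ℕ) • (x - y) := by
      rw [← this, smul_smul]; norm_num
    rw [this, h2]
  have := h4 _ h4'
  have hxy' : x - y = 0 := by
    have h2gy : (2 : ℕ) • (g - y) = x - y := by
      simp only [smul_sub] at *
      rw [hg]; abel
    rw [← h2gy, this]
  exact hxy (sub_eq_zero.mp hxy')
end
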